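/- Let α, β, γ, μ, ν be an admissible solution of System B on [0,∞) with β ≡ γ. Then there exists t₀ ≥ 0 such that either α(t) > 4β(t) for all t > t₀, or α(t) < 4β(t) for all t > t₀. -/

import Mathlib

/-! At a time where `α = 4β` (and `β = γ`) the equations give `α' = 0` and `β' = 4`, so
`α - 4β` has derivative `-16` at each of its zeros.  A differentiable function whose derivative
is negative at every zero can cross zero only downwards and never come back, so after its
first non-positive value it stays negative; otherwise it is positive throughout. -/

/-- **System B**: the homogeneous Ricci flow equations on `SL(2,ℂ)/U(1)` for
real-valued differentiable functions `α β γ μ ν` on a set `s`, with `τ := μ² + ν²`,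
together with the admissibility conditions `α > 0`, `β > 0`, `γ > 0`, `βγ > τ`. -/
def IsAdmissibleSolutionB (α β γ μ ν : ℝ → ℝ) (s : Set ℝ) : Prop :=
  ∀ t ∈ s,
    0 < α t ∧ 0 < β t ∧ 0 < γ t ∧
    μ t ^ 2 + ν t ^ 2 < β t * γ t ∧
    HasDerivWithinAt α
      (2 * (16 * β t * γ t - α t ^ 2) / (β t * γ t - (μ t ^ 2 + ν t ^ 2))) s t ∧
    HasDerivWithinAt β
      (-(β t * (16 * (μ t ^ 2 + ν t ^ 2) - α t ^ 2)) /
        (α t * (β t * γ t - (μ t ^ 2 + ν t ^ 2)))) s t ∧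
    HasDerivWithinAt γ
      (-(γ t * (16 * (μ t ^ 2 + ν t ^ 2) - α t ^ 2)) /
        (α t * (β t * γ t - (μ t ^ 2 + ν t ^ 2)))) s t ∧
    HasDerivWithinAt μ
      (8 - μ t * (16 * β t * γ t - α t ^ 2) /
        (α t * (β t * γ t - (μ t ^ 2 + ν t ^ 2)))) s t ∧
    HasDerivWithinAt ν
      (-(ν t * (16 * β t * γ t - α t ^ 2)) /
        (α t * (β t * γ t - (μ t ^ 2 + ν t ^ 2)))) s t

open Set

lemma IsMaxOn.hasDerivWithinAt_Icc_nonneg {f : ℝ → ℝ} {d s t : ℝ} (hst : s < t)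
    (hmax : IsMaxOn f (Icc s t) t) (hd : HasDerivWithinAt f d (Icc s t) t) : 0 ≤ d := by
  have hcone : s - t ∈ posTangentConeAt (Icc s t) t :=
    sub_mem_posTangentConeAt_of_segment_subset (by rw [segment_symm, segment_eq_Icc hst.le])
  have : (s - t) * d ≤ 0 := by
    simpa using hmax.localize.hasFDerivWithinAt_nonpos hd.hasFDerivWithinAt hcone
  nlinarith

theorem neg_of_nonpos_of_derivWithin_neg_at_zeros {f : ℝ → ℝ} {a s t : ℝ}
    (hf : DifferentiableOn ℝ f (Ici a))
    (hzero : ∀ x ∈ Ici a, f x = 0 → derivWithin f (Ici a) x < 0)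
    (has : a ≤ s) (hst : s < t) (hfs : f s ≤ 0) : f t < 0 := by
  have hsub : Icc s t ⊆ Ici a := fun x hx => has.trans hx.1
  have hderiv : ∀ x ∈ Icc s t, HasDerivWithinAt f (derivWithin f (Ici a) x) (Ici a) x :=
    fun x hx => (hf x (hsub hx)).hasDerivWithinAt
  have hle : ∀ x ∈ Icc s t, f x ≤ 0 :=
    image_le_of_deriv_right_lt_deriv_boundary (hf.continuousOn.mono hsub)
      (fun x hx => (hderiv x (Ico_subset_Icc_self hx)).mono (Ici_subset_Ici.mpr (has.trans hx.1)))
      hfs (fun _ => hasDerivAt_const _ (0 : ℝ)) (fun x hx => hzero x (has.trans hx.1))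
  have ht : t ∈ Icc s t := right_mem_Icc.mpr hst.le
  refine (hle t ht).lt_of_ne fun hft => ?_
  have hmax : IsMaxOn f (Icc s t) t := fun x hx => by simpa [hft] using hle x hx
  exact (hzero t (hsub ht) hft).not_ge
    (hmax.hasDerivWithinAt_Icc_nonneg hst ((hderiv t ht).mono hsub))

theorem exists_eventually_pos_or_neg_of_derivWithin_neg_at_zeros {f : ℝ → ℝ} {a : ℝ}
    (hf : DifferentiableOn ℝ f (Ici a))
    (hzero : ∀ x ∈ Ici a, f x = 0 → derivWithin f (Ici a) x < 0) :
    ∃ t₀, a ≤ t₀ ∧ ((∀ t > t₀, 0 < f t) ∨ (∀ t > t₀, f t < 0)) := by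
  by_cases hnonpos : ∃ s ∈ Ici a, f s ≤ 0
  · obtain ⟨s, has, hfs⟩ := hnonpos
    exact ⟨s, has, Or.inr fun t hst =>
      neg_of_nonpos_of_derivWithin_neg_at_zeros hf hzero has hst hfs⟩
  · push Not at hnonpos
    exact ⟨a, le_rfl, Or.inl fun t hat => hnonpos t hat.le⟩

namespace IsAdmissibleSolutionB

variable {α β γ μ ν : ℝ → ℝ} {s : Set ℝ}

theorem differentiableOn_sub_four_mul (h : IsAdmissibleSolutionB α β γ μ ν s) :
    DifferentiableOn ℝ (fun t => α t - 4 * β t) s := fun t ht =>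
  let ⟨_, _, _, _, hα, hβ, _⟩ := h t ht
  (hα.sub (hβ.const_mul 4)).differentiableWithinAt

theorem hasDerivWithinAt_sub_four_mul_of_eq (h : IsAdmissibleSolutionB α β γ μ ν s) {t : ℝ}
    (ht : t ∈ s) (hβγ : β t = γ t) (hα : α t = 4 * β t) :
    HasDerivWithinAt (fun t => α t - 4 * β t) (-16) s t := by
  obtain ⟨-, hβ, -, hτ, hα', hβ', -⟩ := h t ht
  refine (hα'.sub (hβ'.const_mul 4)).congr_deriv ?_
  rw [← hβγ, hα] at *
  generalize μ t ^ 2 + ν t ^ 2 = τ at hτ ⊢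
  generalize β t = b at hβ hτ ⊢
  have hD : b * b - τ ≠ 0 := by linarith
  have hbD : 4 * b * (b * b - τ) ≠ 0 := mul_ne_zero (by positivity) hD
  rw [mul_div_assoc', div_sub_div _ _ hD hbD, div_eq_iff (mul_ne_zero hD hbD)]
  ring

end IsAdmissibleSolutionB

/-- For an admissible solution of System B on `[0,∞)` with `β ≡ γ`, there is a time
`t₀ ≥ 0` after which either `α > 4β` always, or `α < 4β` always. -/
theorem systemB_eventual_sign_alpha_sub_four_beta (α β γ μ ν : ℝ → ℝ)
    (h : IsAdmissibleSolutionB α β γ μ ν (Set.Ici 0))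
    (hβγ : ∀ t ∈ Set.Ici (0 : ℝ), β t = γ t) :
    ∃ t₀ : ℝ, 0 ≤ t₀ ∧
      ((∀ t > t₀, 4 * β t < α t) ∨ (∀ t > t₀, α t < 4 * β t)) := by
  have hzero : ∀ t ∈ Ici (0 : ℝ), α t - 4 * β t = 0 →
      derivWithin (fun t => α t - 4 * β t) (Ici 0) t < 0 := fun t ht hft => by
    rw [(h.hasDerivWithinAt_sub_four_mul_of_eq ht (hβγ t ht) (by linarith)).derivWithin
      (uniqueDiffOn_Ici 0 t ht)]
    norm_num
  obtain ⟨t₀, ht₀, hpos | hneg⟩ :=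
    exists_eventually_pos_or_neg_of_derivWithin_neg_at_zeros h.differentiableOn_sub_four_mul hzero
  · exact ⟨t₀, ht₀, Or.inl fun t ht => sub_pos.mp (hpos t ht)⟩
  · exact ⟨t₀, ht₀, Or.inr fun t ht => sub_neg.mp (hneg t ht)⟩
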